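/- Let n and m be positive integers, G = S_n ≀ S_2, and let H be any subgroup of G that contains at least one involutive swap. Then for every c ∈ G^m, the tensor product of coset states ψ_c lies in the subspace ℋ₁; in particular ⟪ψ_c, P₁ ψ_c⟫ = 1. -/

import Mathlib

open scoped Classical

@[ext] structure Wr (n : ℕ) where
  fst : Equiv.Perm (Fin n)
  snd : Equiv.Perm (Fin n)
  bit : ZMod 2
  deriving DecidableEq, Fintype

namespace Wr

variable {n : ℕ}

protected def mul (x y : Wr n) : Wr n :=
  ⟨if x.bit = 0 then x.fst * y.fst else x.fst * y.snd,
   if x.bit = 0 then x.snd * y.snd else x.snd * y.fst,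
   x.bit + y.bit⟩

protected def inv (x : Wr n) : Wr n :=
  ⟨if x.bit = 0 then x.fst⁻¹ else x.snd⁻¹,
   if x.bit = 0 then x.snd⁻¹ else x.fst⁻¹,
   x.bit⟩

instance : Group (Wr n) where
  mul := Wr.mul
  one := ⟨1, 1, 0⟩
  inv := Wr.inv
  mul_assoc x y z := by
    show Wr.mul (Wr.mul x y) z = Wr.mul x (Wr.mul y z)
    obtain ⟨a, b, c⟩ := x; obtain ⟨d, e, f⟩ := y; obtain ⟨g, h, i⟩ := z
    rcases (show ∀ j : ZMod 2, j = 0 ∨ j = 1 by decide) c with rfl | rfl <;> rcases (show ∀ j : ZMod 2, j = 0 ∨ j = 1 by decide) f with rfl | rfl <;>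
      simp [Wr.mul, mul_assoc, show (1 : ZMod 2) ≠ 0 by decide,
        show (1 + 1 : ZMod 2) = 0 by decide, show ∀ j : ZMod 2, 1 + (1 + j) = j by decide]
  one_mul x := by
    show Wr.mul ⟨1, 1, 0⟩ x = x
    simp [Wr.mul]
  mul_one x := by
    show Wr.mul x ⟨1, 1, 0⟩ = x
    obtain ⟨a, b, c⟩ := x
    rcases (show ∀ j : ZMod 2, j = 0 ∨ j = 1 by decide) c with rfl | rfl <;> simp [Wr.mul]
  inv_mul_cancel x := by
    show Wr.mul (Wr.inv x) x = ⟨1, 1, 0⟩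
    obtain ⟨a, b, c⟩ := x
    rcases (show ∀ j : ZMod 2, j = 0 ∨ j = 1 by decide) c with rfl | rfl <;> simp [Wr.mul, Wr.inv, show (1 : ZMod 2) ≠ 0 by decide,
      show (1 + 1 : ZMod 2) = 0 by decide]

/-- An involutive swap: an element of the form `(g, g⁻¹, 1)`. -/
def IsSwap (k : Wr n) : Prop := ∃ g : Equiv.Perm (Fin n), k = ⟨g, g⁻¹, 1⟩

/-- The faithful action of `S_n ≀ S_2` on `Fin n ⊕ Fin n`:
`ι(σ,τ,0)` maps `inl i ↦ inl (σ i)`, `inr i ↦ inr (τ i)`, while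
`ι(σ,τ,1)` maps `inl i ↦ inr (τ i)`, `inr i ↦ inl (σ i)`. -/
def iota : Wr n →* Equiv.Perm (Fin n ⊕ Fin n) where
  toFun x := Equiv.sumCongr x.fst x.snd *
    (if x.bit = 0 then 1 else Equiv.sumComm (Fin n) (Fin n))
  map_one' := by
    simp [show ((1 : Wr n)).bit = 0 from rfl, show ((1 : Wr n)).fst = 1 from rfl,
      show ((1 : Wr n)).snd = 1 from rfl]
  map_mul' x y := by
    have hxy : x * y = Wr.mul x y := rfl
    obtain ⟨a, b, c⟩ := x; obtain ⟨d, e, f⟩ := y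
    rw [hxy]
    rcases (show ∀ j : ZMod 2, j = 0 ∨ j = 1 by decide) c with rfl | rfl <;> rcases (show ∀ j : ZMod 2, j = 0 ∨ j = 1 by decide) f with rfl | rfl <;>
      · ext u
        rcases u with u | u <;>
          simp [Wr.mul, show (1 : ZMod 2) ≠ 0 by decide,
            show (1 + 1 : ZMod 2) = 0 by decide, Equiv.Perm.mul_apply]

end Wr

/-- The Hilbert space `ℂ[G^m]`. -/
abbrev GIHilb (n m : ℕ) : Type := EuclideanSpace ℂ (Fin m → Wr n)

noncomputable section

namespace Wr

/-- The `k`-vector associated to `c ∈ G^m`: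
`x ↦ 2^{-m/2} ∏_i [x i ∈ {c i, c i * k}]`. -/
def kvec (n m : ℕ) (k : Wr n) (c : Fin m → Wr n) : GIHilb n m :=
  (WithLp.equiv 2 _).symm fun x =>
    ((Real.sqrt (2 ^ m) : ℝ)⁻¹ : ℂ) *
      ∏ i, (if x i = c i ∨ x i = c i * k then (1 : ℂ) else 0)

/-- `ℋ(k)`: the span of all `k`-vectors. -/
def kSpace (n m : ℕ) (k : Wr n) : Submodule ℂ (GIHilb n m) :=
  Submodule.span ℂ (Set.range (kvec n m k))

/-- `ℋ₁ = ∑_k ℋ(k)`, the sum over all involutive swaps `k`. -/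
def H1 (n m : ℕ) : Submodule ℂ (GIHilb n m) :=
  ⨆ k ∈ {k : Wr n | IsSwap k}, kSpace n m k

/-- The tensor product of coset states of the subgroup `H` with coset representatives `c`:
`x ↦ |H|^{-m/2} ∏_i [x i ∈ c i H]`. -/
def cosetState {n : ℕ} (H : Subgroup (Wr n)) (m : ℕ) (c : Fin m → Wr n) : GIHilb n m :=
  (WithLp.equiv 2 _).symm fun x =>
    ((Real.sqrt ((Nat.card H : ℝ) ^ m))⁻¹ : ℂ) *
      ∏ i, (if (c i)⁻¹ * x i ∈ H then (1 : ℂ) else 0)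

end Wr

/-- The subgroup of `S_n ≀ S_2` of elements acting (via `ι`) as automorphisms of the graph `Γ`. -/
def autSubgroup {n : ℕ} (Γ : SimpleGraph (Fin n ⊕ Fin n)) : Subgroup (Wr n) where
  carrier := {h | ∀ u v, Γ.Adj (Wr.iota h u) (Wr.iota h v) ↔ Γ.Adj u v}
  one_mem' := by intro u v; simp
  mul_mem' := by
    intro a b ha hb u v
    rw [map_mul, Equiv.Perm.mul_apply, Equiv.Perm.mul_apply, ha, hb]
  inv_mem' := by
    intro a ha u v
    have := ha ((Wr.iota a)⁻¹ u) ((Wr.iota a)⁻¹ v)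
    simpa [map_inv] using this.symm

end

/-!
Because `H` contains a nontrivial element `k`, summing the `k`-vectors `v_k(c h)` over `h ∈ H^m`
covers every point of `∏ᵢ cᵢH` exactly `2^m` times: in each coordinate, `xᵢ = cᵢhᵢ` and
`xᵢ = cᵢhᵢk` are solved by the two distinct elements `cᵢ⁻¹xᵢ` and `cᵢ⁻¹xᵢk⁻¹` of `H`. Hence `ψ_c` is
a nonzero multiple of a sum of `k`-vectors and lies in `ℋ(k) ⊆ ℋ₁`; being a unit vector of `ℋ₁`,
it is fixed by `P₁`, so `⟪ψ_c, P₁ψ_c⟫ = ‖ψ_c‖² = 1`.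
-/

section CosetIndicator

variable {G : Type*} [Group G] [Fintype G] {R : Type*} [CommSemiring R]

theorem ite_or_eq_add_of_not_and {p q : Prop} [Decidable p] [Decidable q] (h : ¬(p ∧ q)) :
    (if p ∨ q then (1 : R) else 0) = (if p then 1 else 0) + (if q then 1 else 0) := by
  by_cases hp : p <;> by_cases hq : q <;> simp_all

theorem Subgroup.sum_ite_coe_eq [DecidableEq G] (H : Subgroup G) (a : G) :
    ∑ h : H, (if (h : G) = a then (1 : R) else 0) = if a ∈ H then 1 else 0 := by
  split_ifs with ha
  · simp only [← Subtype.ext_iff (a2 := ⟨a, ha⟩), Fintype.sum_ite_eq']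
  · exact Finset.sum_eq_zero fun h _ => if_neg fun h_eq : (h : G) = a => ha (h_eq ▸ h.2)

theorem Subgroup.sum_ite_inv_mul_mem_eq_card (H : Subgroup G) (c : G) :
    ∑ y : G, (if c⁻¹ * y ∈ H then (1 : R) else 0) = Nat.card H := by
  rw [← Equiv.sum_comp (Equiv.mulLeft c), Finset.sum_boole, Nat.card_eq_fintype_card,
    Fintype.card_subtype]
  simp

theorem Subgroup.sum_ite_mem_pair_eq_two_mul [DecidableEq G] (H : Subgroup G) {k : G} (hk : k ≠ 1)
    (hkH : k ∈ H) (c x : G) :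
    ∑ h : H, (if x = c * h ∨ x = c * h * k then (1 : R) else 0)
      = 2 * if c⁻¹ * x ∈ H then 1 else 0 := by
  have hsplit (h : H) : (if x = c * h ∨ x = c * h * k then (1 : R) else 0)
      = (if (h : G) = c⁻¹ * x then 1 else 0) + (if (h : G) = c⁻¹ * x * k⁻¹ then 1 else 0) := by
    rw [← ite_or_eq_add_of_not_and]
    · simp only [eq_inv_mul_iff_mul_eq, eq_mul_inv_iff_mul_eq, mul_assoc, eq_comm]
    · rintro ⟨h₁, h₂⟩
      rw [h₁, eq_comm, mul_eq_left, inv_eq_one] at h₂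
      exact hk h₂
  have hmem : c⁻¹ * x * k⁻¹ ∈ H ↔ c⁻¹ * x ∈ H := H.mul_mem_cancel_right (H.inv_mem hkH)
  rw [Finset.sum_congr rfl fun h _ => hsplit h, Finset.sum_add_distrib, H.sum_ite_coe_eq,
    H.sum_ite_coe_eq, hmem, two_mul]

theorem Subgroup.sum_prod_ite_mem_pair_eq_two_pow_mul [DecidableEq G] {ι : Type*} [Fintype ι]
    [DecidableEq ι] (H : Subgroup G) {k : G} (hk : k ≠ 1) (hkH : k ∈ H) (c x : ι → G) :
    ∑ h : ι → H, ∏ i, (if x i = c i * h i ∨ x i = c i * h i * k then (1 : R) else 0)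
      = 2 ^ Fintype.card ι * ∏ i, if (c i)⁻¹ * x i ∈ H then 1 else 0 := by
  rw [← Fintype.prod_sum fun i (h : H) =>
    if x i = c i * h ∨ x i = c i * h * k then (1 : R) else 0]
  simp only [H.sum_ite_mem_pair_eq_two_mul hk hkH, Finset.prod_mul_distrib, Finset.prod_const,
    Finset.card_univ]

end CosetIndicator

namespace Wr

variable {n m : ℕ}

theorem IsSwap.ne_one {k : Wr n} (hk : IsSwap k) : k ≠ 1 := by
  obtain ⟨g, rfl⟩ := hk
  exact fun h => one_ne_zero (congrArg Wr.bit h : (1 : ZMod 2) = 0)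

theorem kSpace_le_H1 {k : Wr n} (hk : IsSwap k) : kSpace n m k ≤ H1 n m :=
  le_iSup₂ (f := fun k (_ : k ∈ {k : Wr n | IsSwap k}) => kSpace n m k) k hk

theorem kvec_apply (k : Wr n) (c x : Fin m → Wr n) :
    kvec n m k c x = ((√(2 ^ m) : ℝ)⁻¹ : ℂ) *
      ∏ i, if x i = c i ∨ x i = c i * k then (1 : ℂ) else 0 :=
  rfl

theorem cosetState_apply (H : Subgroup (Wr n)) (c x : Fin m → Wr n) :
    cosetState H m c x = ((√((Nat.card H : ℝ) ^ m))⁻¹ : ℂ) *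
      ∏ i, if (c i)⁻¹ * x i ∈ H then (1 : ℂ) else 0 :=
  rfl

theorem sum_kvec_eq_smul_cosetState (H : Subgroup (Wr n)) {k : Wr n} (hk : k ≠ 1) (hkH : k ∈ H)
    (c : Fin m → Wr n) :
    ∑ h : Fin m → H, kvec n m k (fun i => c i * h i)
      = ((√(2 ^ m) * √((Nat.card H : ℝ) ^ m) : ℝ) : ℂ) • cosetState H m c := by
  ext x
  rw [WithLp.ofLp_sum, Finset.sum_apply]
  simp only [kvec_apply, PiLp.smul_apply, cosetState_apply, ← Finset.mul_sum, smul_eq_mul]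
  rw [H.sum_prod_ite_mem_pair_eq_two_pow_mul hk hkH, Fintype.card_fin]
  have h2 : ((√(2 ^ m) : ℝ) : ℂ) ^ 2 = 2 ^ m := by
    rw [← Complex.ofReal_pow, Real.sq_sqrt (by positivity), Complex.ofReal_pow, Complex.ofReal_ofNat]
  have hr2 : ((√(2 ^ m) : ℝ) : ℂ) ≠ 0 := by
    rw [Complex.ofReal_ne_zero]; positivity
  have hH : 0 < Nat.card H := Nat.card_pos
  have hrH : ((√((Nat.card H : ℝ) ^ m) : ℝ) : ℂ) ≠ 0 := by
    rw [Complex.ofReal_ne_zero]; positivity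
  push_cast
  field_simp
  rw [h2]

theorem cosetState_mem_kSpace (H : Subgroup (Wr n)) {k : Wr n} (hk : k ≠ 1) (hkH : k ∈ H)
    (c : Fin m → Wr n) : cosetState H m c ∈ kSpace n m k := by
  have hsum : ∑ h : Fin m → H, kvec n m k (fun i => c i * h i) ∈ kSpace n m k :=
    Submodule.sum_mem _ fun h _ => Submodule.subset_span ⟨_, rfl⟩
  rw [sum_kvec_eq_smul_cosetState H hk hkH] at hsum
  have hH : 0 < Nat.card H := Nat.card_pos
  refine (Submodule.smul_mem_iff _ ?_).mp hsum
  rw [Complex.ofReal_ne_zero]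
  positivity

theorem norm_cosetState (H : Subgroup (Wr n)) (c : Fin m → Wr n) : ‖cosetState H m c‖ = 1 := by
  have hcoord (x : Fin m → Wr n) : ‖cosetState H m c x‖ ^ 2
      = ((Nat.card H : ℝ) ^ m)⁻¹ * ∏ i, if (c i)⁻¹ * x i ∈ H then (1 : ℝ) else 0 := by
    simp [cosetState_apply, mul_pow, ← Finset.prod_pow, apply_ite, Real.sq_sqrt, inv_pow, norm_prod]
  rw [EuclideanSpace.norm_eq, Real.sqrt_eq_one]
  simp only [hcoord, ← Finset.mul_sum]
  rw [← Fintype.prod_sum fun i y => if (c i)⁻¹ * y ∈ H then (1 : ℝ) else 0]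
  simp only [H.sum_ite_inv_mul_mem_eq_card, Finset.prod_const, Finset.card_univ, Fintype.card_fin]
  have hH : 0 < Nat.card H := Nat.card_pos
  exact inv_mul_cancel₀ (by positivity)

end Wr

open scoped ComplexOrder

theorem cosetState_mem_H1_of_swap_mem_general
    (n m : ℕ)
    (H : Subgroup (Wr n)) (hH : ∃ k ∈ H, Wr.IsSwap k)
    (c : Fin m → Wr n) :
    Wr.cosetState H m c ∈ Wr.H1 n m ∧
      inner (𝕜 := ℂ) (Wr.cosetState H m c)
        (((Wr.H1 n m).orthogonalProjection (Wr.cosetState H m c) : GIHilb n m)) = 1 := by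
  obtain ⟨k, hkH, hk⟩ := hH
  have hmem : Wr.cosetState H m c ∈ Wr.H1 n m :=
    Wr.kSpace_le_H1 hk (Wr.cosetState_mem_kSpace H hk.ne_one hkH c)
  refine ⟨hmem, ?_⟩
  rw [← Submodule.starProjection_apply, Submodule.starProjection_eq_self_iff.mpr hmem,
    inner_self_eq_norm_sq_to_K, Wr.norm_cosetState]
  simp

/-- If a subgroup `H` of `G = S_n ≀ S_2` contains an involutive swap, then every tensor product
of coset states `ψ_c` lies in `ℋ₁`; in particular `⟪ψ_c, P₁ ψ_c⟫ = 1`. -/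
theorem cosetState_mem_H1_of_swap_mem
    (n m : ℕ) (hn : 0 < n) (hm : 0 < m)
    (H : Subgroup (Wr n)) (hH : ∃ k ∈ H, Wr.IsSwap k)
    (c : Fin m → Wr n) :
    Wr.cosetState H m c ∈ Wr.H1 n m ∧
      inner (𝕜 := ℂ) (Wr.cosetState H m c)
        (((Wr.H1 n m).orthogonalProjection (Wr.cosetState H m c) : GIHilb n m)) = 1 :=
  cosetState_mem_H1_of_swap_mem_general n m H hH c
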